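/- Let (e_i) be a normalized conditional (i.e. not unconditional) spreading Schauder basis of a Banach space X, with difference sequence d_1 = e_1, d_i = e_i − e_{i−1} for i ≥ 2. Let D be the closed linear span of (d_{2n})_{n≥1} and Y the closed linear span of (e_{2n−1} + e_{2n})_{n≥1}. Then X is isomorphic to the direct sum D ⊕ Y, and Y is isomorphic to X; in particular X is isomorphic to D ⊕ X. -/

import Mathlib

open Filter Finset Topology NormedSpace
open scoped NNReal

/-- `e` is a Schauder basis of `X`: every vector has a unique expansion whose partial
sums converge in norm. -/
def IsSchauderBasis {X : Type} [NormedAddCommGroup X] [NormedSpace ℝ X] (e : ℕ → X) : Prop :=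
  ∀ x : X, ∃! a : ℕ → ℝ,
    Tendsto (fun n => ∑ i ∈ Finset.range n, a i • e i) atTop (𝓝 x)

/-- `e` is spreading: it is equivalent to each of its subsequences. -/
def IsSpreading {X : Type} [NormedAddCommGroup X] [NormedSpace ℝ X] (e : ℕ → X) : Prop :=
  ∀ n : ℕ → ℕ, StrictMono n → ∃ C : ℝ, 1 ≤ C ∧ ∀ (k : ℕ) (a : ℕ → ℝ),
    ‖∑ i ∈ Finset.range k, a i • e i‖ ≤ C * ‖∑ i ∈ Finset.range k, a i • e (n i)‖ ∧
    ‖∑ i ∈ Finset.range k, a i • e (n i)‖ ≤ C * ‖∑ i ∈ Finset.range k, a i • e i‖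

/-- A sequence is unconditional if sign changes of coefficients are uniformly bounded. -/
def IsUnconditionalSeq {X : Type} [NormedAddCommGroup X] [NormedSpace ℝ X] (x : ℕ → X) : Prop :=
  ∃ C : ℝ, 0 < C ∧ ∀ (k : ℕ) (a ε : ℕ → ℝ), (∀ i, ε i = 1 ∨ ε i = -1) →
    ‖∑ i ∈ Finset.range k, (ε i * a i) • x i‖ ≤ C * ‖∑ i ∈ Finset.range k, a i • x i‖

/-!
Spreading makes any two spreads of a finite sum uniformly comparable, also for two coefficient
sequences placed on two interleaved position sequences. Swapping `e (2n)` and `e (2n+1)` is a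
spread of the sum plus a difference of two spreads, so it extends to a bounded operator `T`; the
closed spans `D` and `Y` are its `-1` and `+1` eigenspaces, whence `X = D ⊕ Y`. The same
difference trick shows that the block sequence `e (2n) + e (2n+1)` is equivalent to `e`, so
`e n ↦ e (2n) + e (2n+1)` maps `X` isomorphically onto `Y`.
-/

open Finsupp in
theorem Finsupp.linearCombination_eq_sum_range {R M : Type*} [Semiring R] [AddCommMonoid M]
    [Module R M] (v : ℕ → M) {c : ℕ →₀ R} {k : ℕ} (hk : c.support ⊆ range k) :
    linearCombination R v c = ∑ i ∈ range k, c i • v i := by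
  rw [linearCombination_apply, sum_of_support_subset c hk _ (by simp)]

theorem Finset.sum_range_two_mul {M : Type*} [AddCommMonoid M] (f : ℕ → M) (k : ℕ) :
    ∑ j ∈ range (2 * k), f j = ∑ n ∈ range k, (f (2 * n) + f (2 * n + 1)) := by
  induction k with
  | zero => simp
  | succ k ih => rw [Nat.mul_succ, sum_range_succ, sum_range_succ, sum_range_succ, ih, add_assoc]

theorem Finset.sum_range_ite_lt {M : Type*} [AddCommMonoid M] (f : ℕ → M) {k m : ℕ}
    (hkm : k ≤ m) : ∑ i ∈ range m, (if i < k then f i else 0) = ∑ i ∈ range k, f i := by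
  rw [← sum_filter]
  congr 1
  ext i
  simp only [mem_filter, mem_range]
  omega

theorem Submodule.isCompl_of_forall_apply_eq_neg {K E : Type*} [Field K] [NeZero (2 : K)]
    [AddCommGroup E] [Module K E] (T : E → E) {p q : Submodule K E}
    (hp : ∀ x ∈ p, T x = -x) (hq : ∀ x ∈ q, T x = x)
    (hsub : ∀ x, x - T x ∈ p) (hadd : ∀ x, x + T x ∈ q) : IsCompl p q := by
  refine ⟨Submodule.disjoint_def.2 fun x hxp hxq => ?_,
    Submodule.codisjoint_iff_exists_add_eq.2 fun x => ?_⟩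
  · have h2x : (2 : K) • x = 0 := by
      rw [two_smul]
      nth_rw 1 [← hq x hxq]
      rw [hp x hxp, neg_add_cancel]
    exact (smul_eq_zero.1 h2x).resolve_left two_ne_zero
  · refine ⟨(2⁻¹ : K) • (x - T x), (2⁻¹ : K) • (x + T x), p.smul_mem _ (hsub x),
      q.smul_mem _ (hadd x), ?_⟩
    rw [← smul_add, sub_add_add_cancel, ← two_smul K x, smul_smul, inv_mul_cancel₀ two_ne_zero,
      one_smul]

namespace IsSchauderBasis

variable {X : Type} [NormedAddCommGroup X] [NormedSpace ℝ X] {e : ℕ → X}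
  {Y : Type*} [NormedAddCommGroup Y] [NormedSpace ℝ Y]

theorem forall_of_isClosed (he : IsSchauderBasis e) {P : X → Prop} (hP : IsClosed {x | P x})
    (h : ∀ k (a : ℕ → ℝ), P (∑ i ∈ range k, a i • e i)) (x : X) : P x := by
  obtain ⟨a, ha, -⟩ := he x
  exact hP.mem_of_tendsto ha (Eventually.of_forall fun k => h k a)

theorem dense_span (he : IsSchauderBasis e) : Dense (Submodule.span ℝ (Set.range e) : Set X) :=
  he.forall_of_isClosed isClosed_closure fun _ _ => subset_closure <|
    Submodule.sum_mem _ fun i _ => Submodule.smul_mem _ _ (Submodule.subset_span ⟨i, rfl⟩)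

theorem apply_mem (he : IsSchauderBasis e) (F : X →L[ℝ] Y) {q : Submodule ℝ Y}
    (hq : IsClosed (q : Set Y)) (h : ∀ i, F (e i) ∈ q) (x : X) : F x ∈ q :=
  he.forall_of_isClosed (P := (F · ∈ q)) (hq.preimage F.continuous) (fun k a => by
    simpa only [map_sum, map_smul] using q.sum_mem fun i _ => q.smul_mem (a i) (h i)) x

theorem exists_clm_apply_eq [CompleteSpace Y] (he : IsSchauderBasis e) {t : ℕ → Y} {C : ℝ}
    (h : ∀ k (a : ℕ → ℝ), ‖∑ i ∈ range k, a i • t i‖ ≤ C * ‖∑ i ∈ range k, a i • e i‖) :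
    ∃ F : X →L[ℝ] Y, ∀ i, F (e i) = t i := by
  have hdense : DenseRange (Finsupp.linearCombination ℝ e) := by
    rw [DenseRange, ← LinearMap.coe_range, Finsupp.range_linearCombination]
    exact he.dense_span
  have hbound : ∃ C, ∀ c, ‖Finsupp.linearCombination ℝ t c‖
      ≤ C * ‖Finsupp.linearCombination ℝ e c‖ := ⟨C, fun c => by
    obtain ⟨k, hk⟩ := c.support.exists_nat_subset_range
    rw [Finsupp.linearCombination_eq_sum_range t hk, Finsupp.linearCombination_eq_sum_range e hk]
    exact h k c⟩
  refine ⟨(Finsupp.linearCombination ℝ t).extendOfNorm (Finsupp.linearCombination ℝ e),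
    fun i => ?_⟩
  simpa using LinearMap.extendOfNorm_eq hdense hbound (Finsupp.single i 1)

theorem nonempty_equiv_closure_span [CompleteSpace X] [CompleteSpace Y] (he : IsSchauderBasis e)
    {t : ℕ → Y} {C K : ℝ}
    (hup : ∀ k (a : ℕ → ℝ), ‖∑ i ∈ range k, a i • t i‖ ≤ C * ‖∑ i ∈ range k, a i • e i‖)
    (hlow : ∀ k (a : ℕ → ℝ), ‖∑ i ∈ range k, a i • e i‖ ≤ K * ‖∑ i ∈ range k, a i • t i‖) :
    Nonempty (X ≃L[ℝ] (Submodule.span ℝ (Set.range t)).topologicalClosure) := by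
  obtain ⟨F, hF⟩ := he.exists_clm_apply_eq hup
  have hFlow : ∀ x, ‖x‖ ≤ K.toNNReal * ‖F x‖ :=
    he.forall_of_isClosed (isClosed_le continuous_norm (by fun_prop)) fun k a => by
      simp only [map_sum, map_smul, hF]
      exact (hlow k a).trans (by gcongr; exact Real.le_coe_toNNReal K)
  have hanti := F.antilipschitz_of_bound hFlow
  have hclosed : IsClosed (Set.range F) := hanti.isClosed_range F.uniformContinuous
  have hrange : F.range = (Submodule.span ℝ (Set.range t)).topologicalClosure := by
    refine le_antisymm ?_ ?_
    · rintro _ ⟨x, rfl⟩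
      refine he.apply_mem F (Submodule.isClosed_topologicalClosure _) (fun i => ?_) x
      exact hF i ▸ Submodule.le_topologicalClosure _ (Submodule.subset_span ⟨i, rfl⟩)
    · refine Submodule.topologicalClosure_minimal _ ?_ (by rw [LinearMap.coe_range]; exact hclosed)
      exact Submodule.span_le.2 (Set.range_subset_iff.2 fun i => ⟨e i, hF i⟩)
  exact ⟨(F.equivRange hanti.injective hclosed).trans (.ofEq _ _ hrange)⟩

end IsSchauderBasis

def interleave {α : Type*} (f g : ℕ → α) (j : ℕ) : α :=
  if j % 2 = 0 then f (j / 2) else g (j / 2)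

@[simp]
theorem interleave_two_mul {α : Type*} (f g : ℕ → α) (n : ℕ) : interleave f g (2 * n) = f n := by
  simp [interleave]

@[simp]
theorem interleave_two_mul_add_one {α : Type*} (f g : ℕ → α) (n : ℕ) :
    interleave f g (2 * n + 1) = g n := by
  simp [interleave, Nat.add_mod, show (2 * n + 1) / 2 = n by omega]

theorem strictMono_interleave {p q : ℕ → ℕ} (h : ∀ n, p n < q n ∧ q n < p (n + 1)) :
    StrictMono (interleave p q) := by
  refine strictMono_nat_of_lt_succ fun j => ?_
  obtain ⟨n, rfl | rfl⟩ := Nat.even_or_odd' j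
  · simpa using (h n).1
  · simpa [show 2 * n + 1 + 1 = 2 * (n + 1) by ring] using (h n).2

section Spreading

variable {X : Type} [NormedAddCommGroup X] [NormedSpace ℝ X] {e : ℕ → X}

def pairSum (e : ℕ → X) (p q : ℕ → ℕ) (α β : ℕ → ℝ) (k : ℕ) : X :=
  ∑ n ∈ range k, (α n • e (p n) + β n • e (q n))

theorem pairSum_eq_sum_interleave (e : ℕ → X) (p q : ℕ → ℕ) (α β : ℕ → ℝ) (k : ℕ) :
    pairSum e p q α β k = ∑ j ∈ range (2 * k), interleave α β j • e (interleave p q j) := by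
  simp [pairSum, sum_range_two_mul]

theorem IsSpreading.exists_norm_pairSum_le (he : IsSpreading e) {p q p' q' : ℕ → ℕ}
    (hpq : ∀ n, p n < q n ∧ q n < p (n + 1)) (hpq' : ∀ n, p' n < q' n ∧ q' n < p' (n + 1)) :
    ∃ C, 0 ≤ C ∧ ∀ k α β, ‖pairSum e p q α β k‖ ≤ C * ‖pairSum e p' q' α β k‖ := by
  obtain ⟨C, hC, hCe⟩ := he _ (strictMono_interleave hpq)
  obtain ⟨C', hC', hC'e⟩ := he _ (strictMono_interleave hpq')
  refine ⟨C * C', by positivity, fun k α β => ?_⟩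
  simp only [pairSum_eq_sum_interleave]
  calc _ ≤ C * ‖∑ j ∈ range (2 * k), interleave α β j • e j‖ := (hCe _ _).2
    _ ≤ C * (C' * _) := by gcongr; exact (hC'e _ _).1
    _ = _ := by ring

theorem IsSpreading.exists_norm_pairSum_swap_le (he : IsSpreading e) :
    ∃ M, ∀ k α β, ‖pairSum e (2 * ·) (2 * · + 1) β α k‖
      ≤ M * ‖pairSum e (2 * ·) (2 * · + 1) α β k‖ := by
  obtain ⟨C₁, hC₁, h₁⟩ := he.exists_norm_pairSum_le (p := (2 * ·)) (q := (2 * · + 1))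
    (p' := (3 * ·)) (q' := (3 * · + 1)) (fun n => by omega) (fun n => by omega)
  obtain ⟨C₂, -, h₂⟩ := he.exists_norm_pairSum_le (p := (3 * · + 1)) (q := (3 * · + 2))
    (p' := (2 * ·)) (q' := (2 * · + 1)) (fun n => by omega) (fun n => by omega)
  obtain ⟨C₃, hC₃, h₃⟩ := he.exists_norm_pairSum_le (p := (3 * ·)) (q := (3 * · + 2))
    (p' := (4 * · + 1)) (q' := (4 * · + 3)) (fun n => by omega) (fun n => by omega)
  obtain ⟨C₄, -, h₄⟩ := he.exists_norm_pairSum_le (p := (4 * ·)) (q := (4 * · + 1))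
    (p' := (2 * ·)) (q' := (2 * · + 1)) (fun n => by omega) (fun n => by omega)
  obtain ⟨C₅, -, h₅⟩ := he.exists_norm_pairSum_le (p := (4 * ·)) (q := (4 * · + 3))
    (p' := (2 * ·)) (q' := (2 * · + 1)) (fun n => by omega) (fun n => by omega)
  refine ⟨C₁ * (C₂ + C₃ * (C₄ + C₅)), fun k α β => ?_⟩
  set x := ‖pairSum e (2 * ·) (2 * · + 1) α β k‖
  -- the error term `β n • (e (3n) - e (3n+2))` spreads to `β n • (e (4n+1) - e (4n+3))`,
  -- a difference of two spreads of `x`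
  have hsplit : pairSum e (3 * ·) (3 * · + 1) β α k
      = pairSum e (3 * · + 1) (3 * · + 2) α β k + pairSum e (3 * ·) (3 * · + 2) β (-β) k := by
    simp only [pairSum, Pi.neg_apply, ← sum_add_distrib]
    exact sum_congr rfl fun n _ => by module
  have hdiff : pairSum e (4 * · + 1) (4 * · + 3) β (-β) k
      = pairSum e (4 * ·) (4 * · + 1) α β k - pairSum e (4 * ·) (4 * · + 3) α β k := by
    simp only [pairSum, Pi.neg_apply, ← sum_sub_distrib]
    exact sum_congr rfl fun n _ => by module
  have hβ : ‖pairSum e (3 * ·) (3 * · + 2) β (-β) k‖ ≤ C₃ * (C₄ * x + C₅ * x) :=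
    (h₃ k β (-β)).trans <| by
      gcongr
      rw [hdiff]
      exact (norm_sub_le _ _).trans (add_le_add (h₄ k α β) (h₅ k α β))
  calc _ ≤ C₁ * ‖pairSum e (3 * ·) (3 * · + 1) β α k‖ := h₁ k β α
    _ ≤ C₁ * (C₂ * x + C₃ * (C₄ * x + C₅ * x)) := by
      gcongr
      rw [hsplit]
      exact (norm_add_le _ _).trans (add_le_add (h₂ k α β) hβ)
    _ = _ := by ring

def pairSwap : ℕ → ℕ := interleave (2 * · + 1) (2 * ·)

theorem IsSpreading.exists_norm_sum_pairSwap_le (he : IsSpreading e) :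
    ∃ M, ∀ k (a : ℕ → ℝ),
      ‖∑ i ∈ range k, a i • e (pairSwap i)‖ ≤ M * ‖∑ i ∈ range k, a i • e i‖ := by
  obtain ⟨M, hM⟩ := he.exists_norm_pairSum_swap_le
  refine ⟨M, fun k a => ?_⟩
  set a' : ℕ → ℝ := fun i => if i < k then a i else 0
  have hpad : ∀ f : ℕ → X, ∑ i ∈ range k, a i • f i
      = ∑ n ∈ range k, (a' (2 * n) • f (2 * n) + a' (2 * n + 1) • f (2 * n + 1)) := by
    intro f
    rw [← sum_range_ite_lt _ (by omega : k ≤ 2 * k), sum_range_two_mul]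
    simp only [a', ite_smul, zero_smul]
  rw [hpad, hpad]
  simp only [pairSwap, interleave_two_mul, interleave_two_mul_add_one]
  simpa only [pairSum, add_comm] using hM k (fun n => a' (2 * n)) (fun n => a' (2 * n + 1))

theorem IsSpreading.exists_norm_sum_smul_add_le (he : IsSpreading e) :
    ∃ C, ∀ k (a : ℕ → ℝ), ‖∑ n ∈ range k, a n • (e (2 * n) + e (2 * n + 1))‖
      ≤ C * ‖∑ n ∈ range k, a n • e n‖ := by
  obtain ⟨C₀, -, h₀⟩ := he (2 * ·) (strictMono_mul_left_of_pos two_pos)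
  obtain ⟨C₁, -, h₁⟩ := he (2 * · + 1) ((strictMono_mul_left_of_pos two_pos).add_const 1)
  refine ⟨C₀ + C₁, fun k a => ?_⟩
  simp only [smul_add, sum_add_distrib, add_mul]
  exact (norm_add_le _ _).trans (add_le_add (h₀ k a).2 (h₁ k a).2)

theorem IsSpreading.exists_norm_sum_le_sum_smul_add (he : IsSpreading e) :
    ∃ K, ∀ k (a : ℕ → ℝ), ‖∑ n ∈ range k, a n • e n‖
      ≤ K * ‖∑ n ∈ range k, a n • (e (2 * n) + e (2 * n + 1))‖ := by
  obtain ⟨C₀, hC₀, h₀⟩ := he (2 * ·) (strictMono_mul_left_of_pos two_pos)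
  obtain ⟨C₁, hC₁, h₁⟩ := he.exists_norm_pairSum_le (p := (2 * ·)) (q := (2 * · + 1))
    (p' := (4 * ·)) (q' := (4 * · + 2)) (fun n => by omega) (fun n => by omega)
  obtain ⟨C₂, -, h₂⟩ := he.exists_norm_pairSum_le (p := (4 * ·)) (q := (4 * · + 1))
    (p' := (2 * ·)) (q' := (2 * · + 1)) (fun n => by omega) (fun n => by omega)
  obtain ⟨C₃, -, h₃⟩ := he.exists_norm_pairSum_le (p := (4 * · + 1)) (q := (4 * · + 2))
    (p' := (2 * ·)) (q' := (2 * · + 1)) (fun n => by omega) (fun n => by omega)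
  refine ⟨C₀ * (1 + C₁ * (C₂ + C₃)) / 2, fun k a => ?_⟩
  have hG : ∑ n ∈ range k, a n • (e (2 * n) + e (2 * n + 1))
      = pairSum e (2 * ·) (2 * · + 1) a a k := by
    simp only [pairSum, smul_add]
  rw [hG]
  set g := ‖pairSum e (2 * ·) (2 * · + 1) a a k‖
  -- `2 ∑ aₙ e₂ₙ` is the block sum plus an alternating sum, which spreads to a difference of
  -- two spreads of the block sum
  have htwo : (2 : ℝ) • ∑ n ∈ range k, a n • e (2 * n)
      = pairSum e (2 * ·) (2 * · + 1) a a k + pairSum e (2 * ·) (2 * · + 1) a (-a) k := by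
    simp only [pairSum, Pi.neg_apply, smul_sum, ← sum_add_distrib]
    exact sum_congr rfl fun n _ => by module
  have hdiff : pairSum e (4 * ·) (4 * · + 2) a (-a) k
      = pairSum e (4 * ·) (4 * · + 1) a a k - pairSum e (4 * · + 1) (4 * · + 2) a a k := by
    simp only [pairSum, Pi.neg_apply, ← sum_sub_distrib]
    exact sum_congr rfl fun n _ => by module
  have halt : ‖pairSum e (2 * ·) (2 * · + 1) a (-a) k‖ ≤ C₁ * (C₂ * g + C₃ * g) :=
    (h₁ k a (-a)).trans <| by
      gcongr
      rw [hdiff]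
      exact (norm_sub_le _ _).trans (add_le_add (h₂ k a a) (h₃ k a a))
  have heven : 2 * ‖∑ n ∈ range k, a n • e (2 * n)‖ ≤ g + C₁ * (C₂ * g + C₃ * g) := by
    rw [← Real.norm_two, ← norm_smul, htwo]
    exact (norm_add_le _ _).trans (add_le_add le_rfl halt)
  calc _ ≤ C₀ * ‖∑ n ∈ range k, a n • e (2 * n)‖ := (h₀ k a).1
    _ ≤ C₀ * ((g + C₁ * (C₂ * g + C₃ * g)) / 2) := by gcongr; linarith
    _ = _ := by ring

end Spreading

theorem IsSchauderBasis.isCompl_closure_span_sub_closure_span_add {X : Type}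
    [NormedAddCommGroup X] [NormedSpace ℝ X] [CompleteSpace X] {e : ℕ → X}
    (he : IsSchauderBasis e) (hs : IsSpreading e) :
    IsCompl (Submodule.span ℝ (Set.range fun n => e (2 * n + 1) - e (2 * n))).topologicalClosure
      (Submodule.span ℝ (Set.range fun n => e (2 * n) + e (2 * n + 1))).topologicalClosure := by
  set D := (Submodule.span ℝ (Set.range fun n => e (2 * n + 1) - e (2 * n))).topologicalClosure
  set Y := (Submodule.span ℝ (Set.range fun n => e (2 * n) + e (2 * n + 1))).topologicalClosure
  obtain ⟨M, hM⟩ := hs.exists_norm_sum_pairSwap_le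
  obtain ⟨T, hT⟩ := he.exists_clm_apply_eq hM
  have hTeven (n : ℕ) : T (e (2 * n)) = e (2 * n + 1) := by simp [hT, pairSwap]
  have hTodd (n : ℕ) : T (e (2 * n + 1)) = e (2 * n) := by simp [hT, pairSwap]
  have hD (n : ℕ) : e (2 * n + 1) - e (2 * n) ∈ D :=
    Submodule.le_topologicalClosure _ (Submodule.subset_span ⟨n, rfl⟩)
  have hY (n : ℕ) : e (2 * n) + e (2 * n + 1) ∈ Y :=
    Submodule.le_topologicalClosure _ (Submodule.subset_span ⟨n, rfl⟩)
  refine Submodule.isCompl_of_forall_apply_eq_neg T (fun x hx => ?_) (fun x hx => ?_)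
    (he.apply_mem (.id ℝ X - T) (Submodule.isClosed_topologicalClosure _) fun i => ?_)
    (he.apply_mem (.id ℝ X + T) (Submodule.isClosed_topologicalClosure _) fun i => ?_)
  · refine ContinuousLinearMap.eqOn_closure_span (g := -.id ℝ X) ?_ hx
    rintro _ ⟨n, rfl⟩
    rw [map_sub, hTeven, hTodd]
    exact (neg_sub _ _).symm
  · refine ContinuousLinearMap.eqOn_closure_span (g := .id ℝ X) ?_ hx
    rintro _ ⟨n, rfl⟩
    rw [map_add, hTeven, hTodd, ContinuousLinearMap.id_apply, add_comm]
  · obtain ⟨n, rfl | rfl⟩ := Nat.even_or_odd' i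
    · change e (2 * n) - T (e (2 * n)) ∈ D
      rw [hTeven, ← neg_sub]
      exact D.neg_mem (hD n)
    · change e (2 * n + 1) - T (e (2 * n + 1)) ∈ D
      rw [hTodd]
      exact hD n
  · obtain ⟨n, rfl | rfl⟩ := Nat.even_or_odd' i
    · change e (2 * n) + T (e (2 * n)) ∈ Y
      rw [hTeven]
      exact hY n
    · change e (2 * n + 1) + T (e (2 * n + 1)) ∈ Y
      rw [hTodd, add_comm]
      exact hY n

theorem decomposition_D_oplus_X_general
    {X : Type} [NormedAddCommGroup X] [NormedSpace ℝ X] [CompleteSpace X]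
    (e : ℕ → X) (hbasis : IsSchauderBasis e)
    (hspread : IsSpreading e)
    (d : ℕ → X) (hd : ∀ i, d (i + 1) = e (i + 1) - e i) :
    Nonempty (X ≃L[ℝ]
        (↥((Submodule.span ℝ (Set.range fun n => d (2 * n + 1))).topologicalClosure) ×
         ↥((Submodule.span ℝ (Set.range fun n => e (2 * n) + e (2 * n + 1))).topologicalClosure)) ) ∧
    Nonempty
      (↥((Submodule.span ℝ (Set.range fun n => e (2 * n) + e (2 * n + 1))).topologicalClosure)
        ≃L[ℝ] X) ∧
    Nonempty (X ≃L[ℝ]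
        (↥((Submodule.span ℝ (Set.range fun n => d (2 * n + 1))).topologicalClosure) × X)) := by
  have hd' : (fun n => d (2 * n + 1)) = fun n => e (2 * n + 1) - e (2 * n) :=
    funext fun n => hd (2 * n)
  rw [hd']
  obtain ⟨C, hC⟩ := hspread.exists_norm_sum_smul_add_le
  obtain ⟨K, hK⟩ := hspread.exists_norm_sum_le_sum_smul_add
  obtain ⟨φ⟩ := hbasis.nonempty_equiv_closure_span
    (t := fun n => e (2 * n) + e (2 * n + 1)) hC hK
  let ψ := (Submodule.prodEquivOfIsTopCompl _ _ <|
    Submodule.IsCompl.isTopCompl_of_isClosed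
      (hbasis.isCompl_closure_span_sub_closure_span_add hspread)
      (Submodule.isClosed_topologicalClosure _) (Submodule.isClosed_topologicalClosure _)).symm
  exact ⟨⟨ψ⟩, ⟨φ.symm⟩, ⟨ψ.trans ((ContinuousLinearEquiv.refl ℝ _).prodCongr φ.symm)⟩⟩

theorem decomposition_D_oplus_X
    {X : Type} [NormedAddCommGroup X] [NormedSpace ℝ X] [CompleteSpace X]
    (e : ℕ → X) (hnorm : ∀ i, ‖e i‖ = 1) (hbasis : IsSchauderBasis e)
    (hspread : IsSpreading e) (hcond : ¬ IsUnconditionalSeq e)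
    (d : ℕ → X) (hd0 : d 0 = e 0) (hd : ∀ i, d (i + 1) = e (i + 1) - e i) :
    Nonempty (X ≃L[ℝ]
        (↥((Submodule.span ℝ (Set.range fun n => d (2 * n + 1))).topologicalClosure) ×
         ↥((Submodule.span ℝ (Set.range fun n => e (2 * n) + e (2 * n + 1))).topologicalClosure)) ) ∧
    Nonempty
      (↥((Submodule.span ℝ (Set.range fun n => e (2 * n) + e (2 * n + 1))).topologicalClosure)
        ≃L[ℝ] X) ∧
    Nonempty (X ≃L[ℝ]
        (↥((Submodule.span ℝ (Set.range fun n => d (2 * n + 1))).topologicalClosure) × X)) :=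
  decomposition_D_oplus_X_general e hbasis hspread d hd
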